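/- Let A = ℂ[x,y,y^{-1}]/(x² - θy^{2p} - 1) with θ ∈ ℂ*, p ∈ ℤ*, and D = x∂_y + pθy^{2p-1}∂_x. Writing x_n = y^n, y_n = xy^n, a_{n-1/2} = ηy^n, b_{n-1/2} = η(xy^n), the products in J_σ(A,D) are: x_n x_m = x_{n+m}, x_n y_m = y_{n+m}, y_n y_m = x_{n+m} + θx_{n+m+2p}, x_n∘a_j = σa_{n+j}, x_n∘b_j = σb_{n+j}, y_n∘a_j = σb_{n+j}, y_n∘b_j = σ(a_{n+j} + θa_{n+j+2p}), a_i∘a_j = (j-i)y_{i+j}, a_i∘b_j = (j-i)x_{i+j} + θ(j-i+p)x_{i+j+2p}, b_i∘b_j = (j-i)(y_{i+j} + θy_{i+j+2p}). -/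

import Mathlib

/-!
In a commutative `ℂ`-algebra with a unit `y` and an element `x` such that `x² = 1 + θy^{2p}`,
a derivation with `D y = x` and `D x = pθy^{2p-1}` acts on the family `y^n`, `xy^n` by
`D(y^n) = n xy^{n-1}` and `D(xy^n) = n y^{n-1} + θ(n + p) y^{n+2p-1}`, the second because
`x·D(y^n)` contains `x²`. Each entry of the table is a product of two members of the family or a
Wronskian `a D(b) - D(a) b` of two of them, and both reduce to the family using `x² = 1 + θy^{2p}`
once more. The quotient ring of the statement is such an algebra, with `y = T 1` and `x = X`.
-/

/-- `ℂ[x, y, y⁻¹]`: polynomials in `x` over Laurent polynomials in `y`. -/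
abbrev Rng : Type := Polynomial (LaurentPolynomial ℂ)

/-- The ideal generated by `x² - θy^{2p} - 1`. -/
noncomputable def relIdeal (θ : ℂ) (p : ℤ) : Ideal Rng :=
  Ideal.span {Polynomial.X ^ 2
    - Polynomial.C (LaurentPolynomial.C θ * LaurentPolynomial.T (2 * p)) - 1}

/-- `A = ℂ[x, y, y⁻¹]/(x² - θy^{2p} - 1)`. -/
abbrev Aqt (θ : ℂ) (p : ℤ) : Type := Rng ⧸ relIdeal θ p

/-- `x_n = y^n` in `A`. -/
noncomputable def xq (θ : ℂ) (p : ℤ) (n : ℤ) : Aqt θ p :=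
  Ideal.Quotient.mk (relIdeal θ p) (Polynomial.C (LaurentPolynomial.T n))

/-- `y_n = x·y^n` in `A`. -/
noncomputable def yq (θ : ℂ) (p : ℤ) (n : ℤ) : Aqt θ p :=
  Ideal.Quotient.mk (relIdeal θ p) (Polynomial.X * Polynomial.C (LaurentPolynomial.T n))

/-- The product of `J_σ(A,D) = A ⊕ ηA`: `a∘b = ab`, `a∘(ηb) = ση(ab)`,
`(ηa)∘(ηb) = aD(b) - D(a)b`. -/
noncomputable def jmulS {A : Type*} [CommRing A] [Algebra ℂ A]
    (D : A →ₗ[ℂ] A) (σ : ℂ) (u v : A × A) : A × A :=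
  (u.1 * v.1 + (u.2 * D v.2 - D u.2 * v.2), σ • (u.1 * v.2 + u.2 * v.1))

namespace Derivation
variable {R A M : Type*} [CommSemiring R] [CommSemiring A] [Algebra R A] [AddCommGroup M]
  [Module A M] [Module R M] (D : Derivation R A M)

theorem leibniz_units_zpow (u : Aˣ) (n : ℤ) :
    D ↑(u ^ n) = n • (↑(u ^ (n - 1)) : A) • D ↑u := by
  induction n using Int.induction_on with
  | zero => simp
  | succ k ih =>
    rw [zpow_add_one, Units.val_mul, leibniz, ih, add_sub_cancel_right, smul_comm (↑u : A),
      ← mul_smul, ← Units.val_mul, ← zpow_one_add, add_sub_cancel, add_smul, one_smul,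
      add_comm]
  | pred k ih =>
    set v := u ^ (-(k : ℤ) - 1)
    have hv : (↑u : A) • D ↑v = (-(k : ℤ) - 1) • (↑v : A) • D ↑u := by
      have h := D.leibniz ↑v ↑u
      rw [← Units.val_mul, ← zpow_add_one, sub_add_cancel, ih] at h
      rw [sub_smul, one_smul, h]
      abel
    calc D ↑v = (↑u⁻¹ : A) • (↑u : A) • D ↑v := by
          rw [← mul_smul, ← Units.val_mul, inv_mul_cancel, Units.val_one, one_smul]
      _ = (-(k : ℤ) - 1) • (↑(u ^ (-(k : ℤ) - 1 - 1)) : A) • D ↑u := by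
          rw [hv, smul_comm, ← mul_smul, ← Units.val_mul, ← zpow_neg_one, ← zpow_add,
            neg_add_eq_sub]

end Derivation

theorem Units.val_zpow_mul_val_zpow {M : Type*} [Monoid M] (u : Mˣ) (n m : ℤ) :
    (↑(u ^ n) : M) * ↑(u ^ m) = ↑(u ^ (n + m)) := by
  rw [← Units.val_mul, ← zpow_add]

namespace LinearMap
variable {R A : Type*} [CommSemiring R] [CommRing A] [Algebra R A]

def wronskian (D : A →ₗ[R] A) (a b : A) : A := a * D b - D a * b

end LinearMap

section Jordan
variable {A : Type*} [CommRing A] [Algebra ℂ A] (D : A →ₗ[ℂ] A) (σ : ℂ)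

theorem jmulS_mk_zero_mk_zero (a b : A) : jmulS D σ (a, 0) (b, 0) = (a * b, 0) := by
  simp [jmulS]

theorem jmulS_mk_zero_zero_mk (a b : A) : jmulS D σ (a, 0) (0, b) = σ • (0, a * b) := by
  simp [jmulS]

theorem jmulS_zero_mk_zero_mk (a b : A) : jmulS D σ (0, a) (0, b) = (D.wronskian a b, 0) := by
  simp [jmulS, LinearMap.wronskian]

end Jordan

namespace HyperellipticAlgebra

section Monoid
variable {A : Type*} [CommMonoid A] {x : A} {y : Aˣ}

theorem val_zpow_mul_mul_val_zpow (n m : ℤ) :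
    (↑(y ^ n) : A) * (x * ↑(y ^ m)) = x * ↑(y ^ (n + m)) := by
  rw [mul_left_comm, Units.val_zpow_mul_val_zpow]

theorem mul_val_zpow_mul_val_zpow (n m : ℤ) :
    x * ↑(y ^ n) * ↑(y ^ m) = x * ↑(y ^ (n + m)) := by
  rw [mul_assoc, Units.val_zpow_mul_val_zpow]

end Monoid

variable {A : Type*} [CommRing A] [Algebra ℂ A] {θ : ℂ} {p : ℤ} {x : A} {y : Aˣ}
  {D : Derivation ℂ A A}

theorem sq_mul_val_zpow (hx : x ^ 2 = 1 + θ • ↑(y ^ (2 * p))) (n : ℤ) :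
    x ^ 2 * ↑(y ^ n) = ↑(y ^ n) + θ • ↑(y ^ (n + 2 * p)) := by
  rw [hx, add_mul, one_mul, smul_mul_assoc, Units.val_zpow_mul_val_zpow, add_comm (2 * p)]

theorem mul_val_zpow_mul_mul_val_zpow (hx : x ^ 2 = 1 + θ • ↑(y ^ (2 * p))) (n m : ℤ) :
    x * ↑(y ^ n) * (x * ↑(y ^ m)) = ↑(y ^ (n + m)) + θ • ↑(y ^ (n + m + 2 * p)) := by
  rw [mul_mul_mul_comm, ← sq, Units.val_zpow_mul_val_zpow, sq_mul_val_zpow hx]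

theorem derivation_val_zpow (hDy : D ↑y = x) (n : ℤ) :
    D ↑(y ^ n) = (n : ℂ) • (x * ↑(y ^ (n - 1))) := by
  rw [D.leibniz_units_zpow, hDy, smul_eq_mul, mul_comm, Int.cast_smul_eq_zsmul]

theorem derivation_mul_val_zpow (hx : x ^ 2 = 1 + θ • ↑(y ^ (2 * p))) (hDy : D ↑y = x)
    (hDx : D x = ((p : ℂ) * θ) • ↑(y ^ (2 * p - 1))) (n : ℤ) :
    D (x * ↑(y ^ n)) =
      (n : ℂ) • ↑(y ^ (n - 1)) + (θ * (n + p)) • ↑(y ^ (n - 1 + 2 * p)) := by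
  have hexp : n + (2 * p - 1) = n - 1 + 2 * p := by ring
  rw [D.leibniz, derivation_val_zpow hDy, hDx, smul_eq_mul, smul_eq_mul, mul_smul_comm,
    mul_smul_comm, ← mul_assoc, ← sq, sq_mul_val_zpow hx, Units.val_zpow_mul_val_zpow, hexp]
  module

theorem wronskian_val_zpow_val_zpow (hDy : D ↑y = x) (n m : ℤ) :
    (D : A →ₗ[ℂ] A).wronskian ↑(y ^ n) ↑(y ^ m) =
      ((m : ℂ) - n) • (x * ↑(y ^ (n + m - 1))) := by
  simp only [LinearMap.wronskian, Derivation.coeFn_coe, derivation_val_zpow hDy, mul_smul_comm,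
    smul_mul_assoc, val_zpow_mul_mul_val_zpow, mul_val_zpow_mul_val_zpow]
  ring_nf
  module

variable (hx : x ^ 2 = 1 + θ • ↑(y ^ (2 * p))) (hDy : D ↑y = x)
  (hDx : D x = ((p : ℂ) * θ) • ↑(y ^ (2 * p - 1)))
include hx hDy hDx

theorem wronskian_val_zpow_mul_val_zpow (n m : ℤ) :
    (D : A →ₗ[ℂ] A).wronskian ↑(y ^ n) (x * ↑(y ^ m)) =
      ((m : ℂ) - n) • ↑(y ^ (n + m - 1)) +
        (θ * ((m : ℂ) - n + p)) • ↑(y ^ (n + m - 1 + 2 * p)) := by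
  simp only [LinearMap.wronskian, Derivation.coeFn_coe, derivation_val_zpow hDy,
    derivation_mul_val_zpow hx hDy hDx, mul_smul_comm, smul_mul_assoc, mul_add,
    Units.val_zpow_mul_val_zpow, mul_val_zpow_mul_mul_val_zpow hx]
  ring_nf
  module

theorem wronskian_mul_val_zpow_mul_val_zpow (n m : ℤ) :
    (D : A →ₗ[ℂ] A).wronskian (x * ↑(y ^ n)) (x * ↑(y ^ m)) =
      ((m : ℂ) - n) •
        (x * ↑(y ^ (n + m - 1)) + θ • (x * ↑(y ^ (n + m - 1 + 2 * p)))) := by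
  simp only [LinearMap.wronskian, Derivation.coeFn_coe, derivation_mul_val_zpow hx hDy hDx,
    mul_smul_comm, smul_mul_assoc, mul_add, add_mul, val_zpow_mul_mul_val_zpow,
    mul_val_zpow_mul_val_zpow]
  ring_nf
  module

end HyperellipticAlgebra

section Quotient
variable (θ : ℂ) (p : ℤ)

theorem xq_mul (n m : ℤ) : xq θ p n * xq θ p m = xq θ p (n + m) := by
  rw [xq, xq, xq, ← map_mul, ← Polynomial.C_mul, ← LaurentPolynomial.T_add]

theorem xq_zero : xq θ p 0 = 1 := by
  rw [xq, LaurentPolynomial.T_zero, map_one, map_one]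

noncomputable def yUnit : (Aqt θ p)ˣ :=
  ⟨xq θ p 1, xq θ p (-1), by rw [xq_mul, add_neg_cancel, xq_zero],
    by rw [xq_mul, neg_add_cancel, xq_zero]⟩

theorem xq_eq_val_zpow (n : ℤ) : xq θ p n = ↑(yUnit θ p ^ n) := by
  induction n using Int.induction_on with
  | zero => rw [zpow_zero, Units.val_one, xq_zero]
  | succ k ih => rw [zpow_add_one, Units.val_mul, ← ih, yUnit, Units.val_mk, xq_mul]
  | pred k ih =>
    rw [zpow_sub_one, Units.val_mul, ← ih, yUnit, Units.inv_mk, Units.val_mk, xq_mul,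
      sub_eq_add_neg]

theorem yq_eq_mk_X_mul (n : ℤ) :
    yq θ p n = Ideal.Quotient.mk (relIdeal θ p) Polynomial.X * xq θ p n := by
  rw [yq, xq, map_mul]

theorem mk_C_mul_T (c : ℂ) (n : ℤ) :
    Ideal.Quotient.mk (relIdeal θ p)
      (Polynomial.C (LaurentPolynomial.C c * LaurentPolynomial.T n)) = c • xq θ p n := by
  rw [xq, ← LaurentPolynomial.smul_eq_C_mul, ← Polynomial.smul_C]
  exact map_smul (Ideal.Quotient.mkₐ ℂ (relIdeal θ p)) c _

theorem sq_mk_X :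
    Ideal.Quotient.mk (relIdeal θ p) Polynomial.X ^ 2 = 1 + θ • ↑(yUnit θ p ^ (2 * p)) := by
  rw [← xq_eq_val_zpow, ← mk_C_mul_T, ← map_one (Ideal.Quotient.mk (relIdeal θ p)),
    ← map_pow, ← map_add, Ideal.Quotient.eq]
  exact Ideal.subset_span (by rw [Set.mem_singleton_iff]; ring)

end Quotient

open HyperellipticAlgebra in
/-- `aa n = ηy^n` and `bb n = η(xy^n)` stand for `a_{n-1/2}` and `b_{n-1/2}`, so for `a_i`, `b_j`
with `i = n - 1/2`, `j = m - 1/2` one has `j - i = m - n` and `i + j = n + m - 1`. -/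
theorem stmt_13_general (θ : ℂ) (p : ℤ)
    (σ : ℂ)
    (D : Derivation ℂ (Aqt θ p) (Aqt θ p))
    (hDy : D (xq θ p 1) = Ideal.Quotient.mk (relIdeal θ p) Polynomial.X)
    (hDx : D (Ideal.Quotient.mk (relIdeal θ p) Polynomial.X) =
      Ideal.Quotient.mk (relIdeal θ p)
        (Polynomial.C (LaurentPolynomial.C ((p : ℂ) * θ) * LaurentPolynomial.T (2 * p - 1)))) :
    let J := jmulS (D.toLinearMap) σ
    let xe : ℤ → Aqt θ p × Aqt θ p := fun n => (xq θ p n, 0)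
    let ye : ℤ → Aqt θ p × Aqt θ p := fun n => (yq θ p n, 0)
    let aa : ℤ → Aqt θ p × Aqt θ p := fun n => (0, xq θ p n)
    let bb : ℤ → Aqt θ p × Aqt θ p := fun n => (0, yq θ p n)
    (∀ n m : ℤ, J (xe n) (xe m) = xe (n + m)) ∧
    (∀ n m : ℤ, J (xe n) (ye m) = ye (n + m)) ∧
    (∀ n m : ℤ, J (ye n) (ye m) = xe (n + m) + θ • xe (n + m + 2 * p)) ∧
    (∀ n m : ℤ, J (xe n) (aa m) = σ • aa (n + m)) ∧
    (∀ n m : ℤ, J (xe n) (bb m) = σ • bb (n + m)) ∧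
    (∀ n m : ℤ, J (ye n) (aa m) = σ • bb (n + m)) ∧
    (∀ n m : ℤ, J (ye n) (bb m) = σ • (aa (n + m) + θ • aa (n + m + 2 * p))) ∧
    (∀ n m : ℤ, J (aa n) (aa m) = ((m : ℂ) - (n : ℂ)) • ye (n + m - 1)) ∧
    (∀ n m : ℤ, J (aa n) (bb m) = ((m : ℂ) - (n : ℂ)) • xe (n + m - 1)
        + (θ * ((m : ℂ) - (n : ℂ) + (p : ℂ))) • xe (n + m - 1 + 2 * p)) ∧
    (∀ n m : ℤ, J (bb n) (bb m) =
        ((m : ℂ) - (n : ℂ)) • (ye (n + m - 1) + θ • ye (n + m - 1 + 2 * p))) := by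
  intro J xe ye aa bb
  have hx := sq_mk_X θ p
  have hDy' : D ↑(yUnit θ p) = Ideal.Quotient.mk (relIdeal θ p) Polynomial.X := hDy
  have hDx' : D (Ideal.Quotient.mk (relIdeal θ p) Polynomial.X) =
      ((p : ℂ) * θ) • ↑(yUnit θ p ^ (2 * p - 1)) := by
    rw [hDx, mk_C_mul_T, xq_eq_val_zpow]
  -- `A` is given explicitly: unifying the quotient's ring structure with a metavariable fails
  simp only [J, xe, ye, aa, bb, yq_eq_mk_X_mul, xq_eq_val_zpow, jmulS_mk_zero_mk_zero,
    jmulS_mk_zero_zero_mk, jmulS_zero_mk_zero_mk,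
    Units.val_zpow_mul_val_zpow (yUnit θ p), val_zpow_mul_mul_val_zpow (A := Aqt θ p),
    mul_val_zpow_mul_val_zpow (A := Aqt θ p), mul_val_zpow_mul_mul_val_zpow (A := Aqt θ p) hx,
    wronskian_val_zpow_val_zpow (A := Aqt θ p) hDy',
    wronskian_val_zpow_mul_val_zpow (A := Aqt θ p) hx hDy' hDx',
    wronskian_mul_val_zpow_mul_val_zpow (A := Aqt θ p) hx hDy' hDx',
    Prod.smul_mk, Prod.mk_add_mk, smul_zero, add_zero, smul_add, and_self, implies_true]

/-- the multiplication table of `J_σ(A,D)` for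
`A = ℂ[x,y,y⁻¹]/(x² - θy^{2p} - 1)`, `D = x∂_y + pθy^{2p-1}∂_x`, in terms of
`x_n = y^n`, `y_n = xy^n`, `a_{n-1/2} = ηy^n`, `b_{n-1/2} = η(xy^n)`
(so `a_i∘b_j` below has `i = n - 1/2`, `j = m - 1/2`, `j - i = m - n`,
`i + j = n + m - 1`). -/
theorem stmt_13 (θ : ℂ) (hθ : θ ≠ 0) (p : ℤ) (hp : p ≠ 0)
    (σ : ℂ) (hσ : σ = 1/2 ∨ σ = 1)
    (D : Derivation ℂ (Aqt θ p) (Aqt θ p))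
    (hDy : D (xq θ p 1) = Ideal.Quotient.mk (relIdeal θ p) Polynomial.X)
    (hDx : D (Ideal.Quotient.mk (relIdeal θ p) Polynomial.X) =
      Ideal.Quotient.mk (relIdeal θ p)
        (Polynomial.C (LaurentPolynomial.C ((p : ℂ) * θ) * LaurentPolynomial.T (2 * p - 1)))) :
    let J := jmulS (D.toLinearMap) σ
    let xe : ℤ → Aqt θ p × Aqt θ p := fun n => (xq θ p n, 0)
    let ye : ℤ → Aqt θ p × Aqt θ p := fun n => (yq θ p n, 0)
    let aa : ℤ → Aqt θ p × Aqt θ p := fun n => (0, xq θ p n)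
    let bb : ℤ → Aqt θ p × Aqt θ p := fun n => (0, yq θ p n)
    (∀ n m : ℤ, J (xe n) (xe m) = xe (n + m)) ∧
    (∀ n m : ℤ, J (xe n) (ye m) = ye (n + m)) ∧
    (∀ n m : ℤ, J (ye n) (ye m) = xe (n + m) + θ • xe (n + m + 2 * p)) ∧
    (∀ n m : ℤ, J (xe n) (aa m) = σ • aa (n + m)) ∧
    (∀ n m : ℤ, J (xe n) (bb m) = σ • bb (n + m)) ∧
    (∀ n m : ℤ, J (ye n) (aa m) = σ • bb (n + m)) ∧
    (∀ n m : ℤ, J (ye n) (bb m) = σ • (aa (n + m) + θ • aa (n + m + 2 * p))) ∧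
    (∀ n m : ℤ, J (aa n) (aa m) = ((m : ℂ) - (n : ℂ)) • ye (n + m - 1)) ∧
    (∀ n m : ℤ, J (aa n) (bb m) = ((m : ℂ) - (n : ℂ)) • xe (n + m - 1)
        + (θ * ((m : ℂ) - (n : ℂ) + (p : ℂ))) • xe (n + m - 1 + 2 * p)) ∧
    (∀ n m : ℤ, J (bb n) (bb m) =
        ((m : ℂ) - (n : ℂ)) • (ye (n + m - 1) + θ • ye (n + m - 1 + 2 * p))) :=
  stmt_13_general θ p σ D hDy hDx
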